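/- Let L>0 and Ω=(0,L)×(-1,1). There exists a constant c>0, depending only on Ω, such that for every κ>0, every smooth Ω-periodic, divergence-free vector field v=(v₁,v₂), and every smooth Ω-periodic scalar function ξ: |∫_Ω ((v·∇)ξ)(x) Δξ(x) dx| ≤ (κ/20)‖Δξ‖² + (c/κ³)‖v‖²(‖v‖² + ‖∇v‖²)‖∇ξ‖². -/

import Mathlib

open MeasureTheory Real Filter

noncomputable section

/-- First partial derivative. -/
def d1 (f : ℝ × ℝ → ℝ) (p : ℝ × ℝ) : ℝ := fderiv ℝ f p (1, 0)

/-- Second partial derivative. -/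
def d2 (f : ℝ × ℝ → ℝ) (p : ℝ × ℝ) : ℝ := fderiv ℝ f p (0, 1)

/-- Laplacian. -/
def lap (f : ℝ × ℝ → ℝ) (p : ℝ × ℝ) : ℝ := d1 (d1 f) p + d2 (d2 f) p

/-- The domain Ω = (0,L) × (-1,1). -/
def Omg (L : ℝ) : Set (ℝ × ℝ) := Set.Ioo 0 L ×ˢ Set.Ioo (-1) 1

/-- Squared L² norm over Ω. -/
def nrmSq (L : ℝ) (f : ℝ × ℝ → ℝ) : ℝ := ∫ p in Omg L, (f p) ^ 2

/-- L² norm over Ω. -/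
def nrm (L : ℝ) (f : ℝ × ℝ → ℝ) : ℝ := Real.sqrt (nrmSq L f)

/-- Squared L² norm of the gradient over Ω. -/
def gradNrmSq (L : ℝ) (f : ℝ × ℝ → ℝ) : ℝ := ∫ p in Omg L, ((d1 f p) ^ 2 + (d2 f p) ^ 2)

/-- L² norm of the gradient over Ω. -/
def gradNrm (L : ℝ) (f : ℝ × ℝ → ℝ) : ℝ := Real.sqrt (gradNrmSq L f)

/-- Squared L² norm of the Laplacian over Ω. -/
def lapNrmSq (L : ℝ) (f : ℝ × ℝ → ℝ) : ℝ := ∫ p in Omg L, (lap f p) ^ 2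

/-- L² norm of the Laplacian over Ω. -/
def lapNrm (L : ℝ) (f : ℝ × ℝ → ℝ) : ℝ := Real.sqrt (lapNrmSq L f)

/-- Ω-periodic: L-periodic in x₁ and 2-periodic in x₂. -/
def OmgPeriodic (L : ℝ) (f : ℝ × ℝ → ℝ) : Prop :=
  (∀ x y : ℝ, f (x + L, y) = f (x, y)) ∧ (∀ x y : ℝ, f (x, y + 2) = f (x, y))

/-- Divergence-free vector field. -/
def DivFree (u₁ u₂ : ℝ × ℝ → ℝ) : Prop := ∀ p, d1 u₁ p + d2 u₂ p = 0

/-- Symmetric vector field: first component even in x₂, second odd in x₂. -/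
def Symm (u₁ u₂ : ℝ × ℝ → ℝ) : Prop :=
  (∀ x y : ℝ, u₁ (x, -y) = u₁ (x, y)) ∧ (∀ x y : ℝ, u₂ (x, -y) = -u₂ (x, y))

/-!
Two applications of the Cauchy–Schwarz inequality give
`(∫ (v·∇ξ) Δξ)⁴ ≤ ∫ |v|⁴ · ∫ |∇ξ|⁴ · ‖Δξ‖⁴`.

Ladyzhenskaya's inequality `∫ f⁴ ≤ C ‖f‖² (‖f‖² + ‖∇f‖²)` holds on the rectangle for every smooth
`f`: bounding `f²` on each horizontal line by its mean plus its total variation gives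
`f² ≤ A(y)`, and likewise `f² ≤ B(x)` on vertical lines, so `∫ f⁴ ≤ ∫ A · ∫ B` with both factors
`≲ ‖f‖² + ‖f‖ ‖∇f‖`. Applied to `v₁, v₂` and to `∂₁ξ, ∂₂ξ` it bounds `∫ |v|⁴` by
`C ‖v‖² (‖v‖² + ‖∇v‖²)` and `∫ |∇ξ|⁴` by `C ‖∇ξ‖² (‖∇ξ‖² + ‖Δξ‖²)`; the latter uses
`‖∇∂₁ξ‖² + ‖∇∂₂ξ‖² = ‖Δξ‖²`, obtained for periodic `ξ` by two integrations by parts.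
Periodicity also gives `∂ᵢξ` mean zero on every line, so the one-dimensional Poincaré inequality
yields `‖∇ξ‖² ≤ max(L², 4) ‖Δξ‖²`. Altogether `(∫ (v·∇ξ) Δξ)⁴ ≤ M ‖Δξ‖⁶` with
`M ∝ ‖v‖² (‖v‖² + ‖∇v‖²) ‖∇ξ‖²`, and Young's inequality with exponents `4/3` and `4` splits
`M^(1/4) ‖Δξ‖^(3/2)` into `κ/20 ‖Δξ‖² + c M / κ³`.
-/

open scoped ContDiff
open Set

theorem sq_integral_mul_le {α : Type*} [MeasurableSpace α] {μ : Measure α} {f g : α → ℝ}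
    (hf : MemLp f 2 μ) (hg : MemLp g 2 μ) :
    (∫ a, f a * g a ∂μ) ^ 2 ≤ (∫ a, f a ^ 2 ∂μ) * ∫ a, g a ^ 2 ∂μ := by
  have holder := integral_mul_norm_le_Lp_mul_Lq Real.HolderConjugate.two_two
    (by simpa using hf) (by simpa using hg)
  simp only [Real.norm_eq_abs, Real.rpow_two, sq_abs, ← Real.sqrt_eq_rpow] at holder
  calc (∫ a, f a * g a ∂μ) ^ 2 = |∫ a, f a * g a ∂μ| ^ 2 := (sq_abs _).symm
    _ ≤ (√(∫ a, f a ^ 2 ∂μ) * √(∫ a, g a ^ 2 ∂μ)) ^ 2 := by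
      gcongr
      refine abs_integral_le_integral_abs.trans (le_of_eq_of_le ?_ holder)
      simp only [abs_mul]
    _ = (∫ a, f a ^ 2 ∂μ) * ∫ a, g a ^ 2 ∂μ := by
      rw [mul_pow, Real.sq_sqrt (integral_nonneg fun _ => sq_nonneg _),
        Real.sq_sqrt (integral_nonneg fun _ => sq_nonneg _)]

theorem Continuous.memLp_restrict_of_subset_isCompact {X : Type*} [TopologicalSpace X]
    [MeasurableSpace X] [OpensMeasurableSpace X] {μ : Measure X} [IsFiniteMeasureOnCompacts μ]
    {F : X → ℝ} (hF : Continuous F) {s K : Set X} (hs : MeasurableSet s) (hK : IsCompact K)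
    (hsK : s ⊆ K) (p : ENNReal) : MemLp F p (μ.restrict s) := by
  have : IsFiniteMeasure (μ.restrict s) :=
    isFiniteMeasure_restrict.2 ((measure_mono hsK).trans_lt hK.measure_lt_top).ne
  obtain ⟨C, hC⟩ := hK.exists_bound_of_continuousOn hF.continuousOn
  exact MemLp.of_bound hF.aestronglyMeasurable.restrict C
    (ae_restrict_of_forall_mem hs fun x hx => hC x (hsK hx))

theorem Continuous.memLp_restrict_Ioo {F : ℝ → ℝ} (hF : Continuous F) (a b : ℝ) (p : ENNReal) :
    MemLp F p (volume.restrict (Ioo a b)) :=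
  hF.memLp_restrict_of_subset_isCompact measurableSet_Ioo isCompact_Icc Ioo_subset_Icc_self p

theorem Continuous.integrableOn_Ioo {F : ℝ → ℝ} (hF : Continuous F) (a b : ℝ) :
    IntegrableOn F (Ioo a b) :=
  memLp_one_iff_integrable.1 (hF.memLp_restrict_Ioo a b 1)

theorem integral_sq_le_integral_mul_integral {α β : Type*} [MeasurableSpace α]
    [MeasurableSpace β] {μ : Measure α} {ν : Measure β} [SFinite μ] [SFinite ν]
    {u : α × β → ℝ} {F : α → ℝ} {G : β → ℝ} (hF : Integrable F μ) (hG : Integrable G ν)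
    (hu : ∀ᵐ z ∂μ.prod ν, 0 ≤ u z) (huF : ∀ᵐ z ∂μ.prod ν, u z ≤ F z.1)
    (huG : ∀ᵐ z ∂μ.prod ν, u z ≤ G z.2) :
    ∫ z, u z ^ 2 ∂μ.prod ν ≤ (∫ x, F x ∂μ) * ∫ y, G y ∂ν := by
  rw [← integral_prod_mul]
  refine integral_mono_of_nonneg (.of_forall fun z => sq_nonneg _) (hF.mul_prod hG) ?_
  filter_upwards [hu, huF, huG] with z h0 hzF hzG
  rw [sq]
  exact mul_le_mul hzF hzG h0 (h0.trans hzF)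

theorem le_add_of_pow_four_le_mul_pow_three {I D M κ : ℝ} (hD : 0 ≤ D) (hM : 0 ≤ M)
    (hκ : 0 < κ) (h : I ^ 4 ≤ M * D ^ 3) : I ≤ κ / 20 * D + 3375 / 4 * M / κ ^ 3 := by
  set x := κ * D / 60
  set y := 3375 / 4 * M / κ ^ 3
  have hx : 0 ≤ x := by positivity
  have hy : 0 ≤ y := by positivity
  have hxy : M * D ^ 3 = 256 * x ^ 3 * y := by
    simp only [x, y]
    field_simp
    ring
  -- AM-GM for `x, x, x, y`
  have amgm : 256 * x ^ 3 * y ≤ (3 * x + y) ^ 4 := by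
    have : 0 ≤ (y - x) ^ 2 * (y ^ 2 + 14 * x * y + 81 * x ^ 2) := by positivity
    linarith [show (3 * x + y) ^ 4 - 256 * x ^ 3 * y =
      (y - x) ^ 2 * (y ^ 2 + 14 * x * y + 81 * x ^ 2) by ring]
  by_contra! hlt
  have : (3 * x + y) ^ 4 < I ^ 4 :=
    pow_lt_pow_left₀ (by simp only [x]; linarith) (by positivity) (by norm_num)
  linarith

section OneDimensional

variable {a b : ℝ} {φ φ' : ℝ → ℝ}

theorem sub_le_integral_abs_deriv (hd : ∀ x, HasDerivAt φ (φ' x) x) (hφ' : Continuous φ')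
    {x s : ℝ} (hx : x ∈ Icc a b) (hs : s ∈ Icc a b) :
    φ x - φ s ≤ ∫ t in Ioo a b, |φ' t| := by
  rw [← intervalIntegral.integral_eq_sub_of_hasDerivAt (fun t _ => hd t)
    (hφ'.intervalIntegrable s x), ← integral_Icc_eq_integral_Ioo]
  calc ∫ t in s..x, φ' t ≤ ∫ t in uIoc s x, |φ' t| := by
        simpa only [Real.norm_eq_abs] using
          (le_abs_self _).trans (intervalIntegral.norm_integral_le_integral_norm_uIoc (f := φ'))
    _ ≤ ∫ t in Icc a b, |φ' t| :=
        setIntegral_mono_set (hφ'.abs.continuousOn.integrableOn_compact isCompact_Icc)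
          (.of_forall fun t => abs_nonneg _)
          (uIoc_subset_uIcc.trans (uIcc_subset_Icc hs hx)).eventuallyLE

theorem le_setAverage_add_integral_abs_deriv (hab : a < b) (hd : ∀ x, HasDerivAt φ (φ' x) x)
    (hφ' : Continuous φ') {x : ℝ} (hx : x ∈ Icc a b) :
    φ x ≤ (⨍ s in Ioo a b, φ s) + ∫ s in Ioo a b, |φ' s| := by
  have hφ : Continuous φ := continuous_iff_continuousAt.2 fun x => (hd x).continuousAt
  obtain ⟨s, hs, hs_le⟩ := exists_le_setAverage (by simp [hab]) (by simp)
    (hφ.integrableOn_Ioo a b)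
  calc φ x ≤ φ s + ∫ s in Ioo a b, |φ' s| := by
        linarith [sub_le_integral_abs_deriv hd hφ' hx (Ioo_subset_Icc_self hs)]
    _ ≤ _ := add_le_add_left hs_le _

theorem abs_le_integral_abs_deriv_of_integral_eq_zero (hab : a < b)
    (hd : ∀ x, HasDerivAt φ (φ' x) x) (hφ' : Continuous φ') (hφ : ∫ s in Ioo a b, φ s = 0)
    {x : ℝ} (hx : x ∈ Icc a b) : |φ x| ≤ ∫ s in Ioo a b, |φ' s| := by
  have hpos := le_setAverage_add_integral_abs_deriv hab hd hφ' hx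
  have hneg := le_setAverage_add_integral_abs_deriv hab (fun x => (hd x).neg) hφ'.neg hx
  simp only [setAverage_eq, Pi.neg_apply, integral_neg, hφ, neg_zero, smul_zero, zero_add, abs_neg]
    at hpos hneg
  exact abs_le.2 ⟨by linarith, hpos⟩

theorem integral_sq_le_of_integral_eq_zero (hab : a < b) (hd : ∀ x, HasDerivAt φ (φ' x) x)
    (hφ' : Continuous φ') (hφ : ∫ s in Ioo a b, φ s = 0) :
    ∫ s in Ioo a b, φ s ^ 2 ≤ (b - a) ^ 2 * ∫ s in Ioo a b, φ' s ^ 2 := by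
  set K := ∫ s in Ioo a b, |φ' s|
  have hvol : volume.real (Ioo a b) = b - a := Real.volume_real_Ioo_of_le hab.le
  have hK : K ^ 2 ≤ (b - a) * ∫ s in Ioo a b, φ' s ^ 2 := by
    have := sq_integral_mul_le (hφ'.abs.memLp_restrict_Ioo a b 2)
      (continuous_const.memLp_restrict_Ioo a b 2 : MemLp (fun _ => (1 : ℝ)) 2 _)
    simpa only [mul_one, sq_abs, one_pow, setIntegral_const, hvol, smul_eq_mul, mul_comm] using this
  have hφc : Continuous φ := continuous_iff_continuousAt.2 fun x => (hd x).continuousAt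
  calc ∫ s in Ioo a b, φ s ^ 2 ≤ ∫ _ in Ioo a b, K ^ 2 := by
        refine setIntegral_mono_on ((hφc.pow 2).integrableOn_Ioo a b)
          (continuous_const.integrableOn_Ioo a b) measurableSet_Ioo fun s hs => ?_
        rw [← sq_abs]
        exact pow_le_pow_left₀ (abs_nonneg _)
          (abs_le_integral_abs_deriv_of_integral_eq_zero hab hd hφ' hφ (Ioo_subset_Icc_self hs)) 2
    _ = (b - a) * K ^ 2 := by rw [setIntegral_const, hvol, smul_eq_mul]
    _ ≤ (b - a) ^ 2 * ∫ s in Ioo a b, φ' s ^ 2 := by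
        nlinarith [mul_le_mul_of_nonneg_left hK (sub_pos.2 hab).le]

theorem integral_deriv_eq_zero_of_periodic {T : ℝ} (hT : 0 ≤ T) (hd : ∀ x, HasDerivAt φ (φ' x) x)
    (hφ' : Continuous φ') (hφ : Function.Periodic φ T) (a : ℝ) :
    ∫ s in Ioo a (a + T), φ' s = 0 := by
  rw [← integral_Ioc_eq_integral_Ioo, ← intervalIntegral.integral_of_le (by linarith),
    intervalIntegral.integral_eq_sub_of_hasDerivAt (fun x _ => hd x) (hφ'.intervalIntegrable _ _),
    hφ a, sub_self]

end OneDimensional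

section PartialDerivatives

variable {L : ℝ} {f g : ℝ × ℝ → ℝ}

theorem contDiff_d1 (hf : ContDiff ℝ ∞ f) : ContDiff ℝ ∞ (d1 f) :=
  (hf.fderiv_right le_rfl).clm_apply contDiff_const

theorem contDiff_d2 (hf : ContDiff ℝ ∞ f) : ContDiff ℝ ∞ (d2 f) :=
  (hf.fderiv_right le_rfl).clm_apply contDiff_const

theorem contDiff_lap (hf : ContDiff ℝ ∞ f) : ContDiff ℝ ∞ (lap f) :=
  (contDiff_d1 (contDiff_d1 hf)).add (contDiff_d2 (contDiff_d2 hf))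

theorem hasDerivAt_d1 {x y : ℝ} (hf : DifferentiableAt ℝ f (x, y)) :
    HasDerivAt (fun t => f (t, y)) (d1 f (x, y)) x := by
  simpa [d1, Function.comp_def] using
    (hf.hasFDerivAt.comp x ((hasFDerivAt_id x).prodMk (hasFDerivAt_const y x))).hasDerivAt

theorem hasDerivAt_d2 {x y : ℝ} (hf : DifferentiableAt ℝ f (x, y)) :
    HasDerivAt (fun t => f (x, t)) (d2 f (x, y)) y := by
  simpa [d2, Function.comp_def] using
    (hf.hasFDerivAt.comp y ((hasFDerivAt_const x y).prodMk (hasFDerivAt_id y))).hasDerivAt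

theorem d1_mul {p : ℝ × ℝ} (hf : DifferentiableAt ℝ f p) (hg : DifferentiableAt ℝ g p) :
    d1 (fun q => f q * g q) p = d1 f p * g p + f p * d1 g p := by
  simp only [d1, fderiv_fun_mul hf hg, add_apply, smul_apply, smul_eq_mul]
  ring

theorem d2_mul {p : ℝ × ℝ} (hf : DifferentiableAt ℝ f p) (hg : DifferentiableAt ℝ g p) :
    d2 (fun q => f q * g q) p = d2 f p * g p + f p * d2 g p := by
  simp only [d2, fderiv_fun_mul hf hg, add_apply, smul_apply, smul_eq_mul]
  ring

theorem d1_d2 (hf : ContDiff ℝ 2 f) : d1 (d2 f) = d2 (d1 f) := by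
  funext p
  have hdiff : DifferentiableAt ℝ (fderiv ℝ f) p :=
    (hf.fderiv_right (m := 1) le_rfl).differentiable one_ne_zero p
  have hsymm : IsSymmSndFDerivAt ℝ f p := hf.contDiffAt.isSymmSndFDerivAt (by simp)
  show fderiv ℝ (fun q => fderiv ℝ f q (0, 1)) p (1, 0)
    = fderiv ℝ (fun q => fderiv ℝ f q (1, 0)) p (0, 1)
  simp only [fderiv_clm_apply hdiff (differentiableAt_const _), fderiv_fun_const, Pi.zero_apply,
    ContinuousLinearMap.comp_zero, zero_add, ContinuousLinearMap.flip_apply]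
  exact hsymm _ _

theorem OmgPeriodic.fderiv_apply (hf : OmgPeriodic L f) (w : ℝ × ℝ) :
    OmgPeriodic L (fun p => fderiv ℝ f p w) := by
  have shift : ∀ c : ℝ × ℝ, (∀ q, f (q + c) = f q) → ∀ q, fderiv ℝ f (q + c) w = fderiv ℝ f q w :=
    fun c hc q => by rw [← fderiv_comp_add_right, funext hc]
  refine ⟨fun x y => ?_, fun x y => ?_⟩
  · simpa using shift (L, 0) (fun ⟨x, y⟩ => by simpa using hf.1 x y) (x, y)
  · simpa using shift (0, 2) (fun ⟨x, y⟩ => by simpa using hf.2 x y) (x, y)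

theorem OmgPeriodic.d1 (hf : OmgPeriodic L f) : OmgPeriodic L (d1 f) := hf.fderiv_apply (1, 0)

theorem OmgPeriodic.d2 (hf : OmgPeriodic L f) : OmgPeriodic L (d2 f) := hf.fderiv_apply (0, 1)

theorem OmgPeriodic.mul (hf : OmgPeriodic L f) (hg : OmgPeriodic L g) :
    OmgPeriodic L (fun p => f p * g p) :=
  ⟨fun x y => by simp only [hf.1, hg.1], fun x y => by simp only [hf.2, hg.2]⟩

end PartialDerivatives

section Rectangle

variable {L : ℝ} {F f g : ℝ × ℝ → ℝ}

theorem measurableSet_Omg : MeasurableSet (Omg L) := measurableSet_Ioo.prod measurableSet_Ioo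

theorem Continuous.memLp_restrict_Omg (hF : Continuous F) (p : ENNReal) :
    MemLp F p (volume.restrict (Omg L)) :=
  hF.memLp_restrict_of_subset_isCompact measurableSet_Omg (isCompact_Icc.prod isCompact_Icc)
    (prod_mono Ioo_subset_Icc_self Ioo_subset_Icc_self) p

theorem Continuous.integrableOn_Omg (hF : Continuous F) : IntegrableOn F (Omg L) :=
  memLp_one_iff_integrable.1 (hF.memLp_restrict_Omg 1)

theorem restrict_Omg :
    volume.restrict (Omg L) = (volume.restrict (Ioo 0 L)).prod (volume.restrict (Ioo (-1) 1)) := by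
  rw [Omg, Measure.volume_eq_prod, Measure.prod_restrict]

theorem setIntegral_Omg (F : ℝ × ℝ → ℝ) (hF : IntegrableOn F (Omg L)) :
    ∫ p in Omg L, F p = ∫ x in Ioo 0 L, ∫ y in Ioo (-1) 1, F (x, y) :=
  setIntegral_prod F hF

theorem setIntegral_Omg_swap (F : ℝ × ℝ → ℝ) (hF : IntegrableOn F (Omg L)) :
    ∫ p in Omg L, F p = ∫ y in Ioo (-1) 1, ∫ x in Ioo 0 L, F (x, y) := by
  rw [setIntegral_Omg F hF]
  exact integral_integral_swap (by rwa [Measure.prod_restrict])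

theorem MeasureTheory.IntegrableOn.integral_Omg_left (hF : IntegrableOn F (Omg L)) :
    IntegrableOn (fun x => ∫ y in Ioo (-1) 1, F (x, y)) (Ioo 0 L) := by
  rw [IntegrableOn, restrict_Omg] at hF
  exact hF.integral_prod_left

theorem MeasureTheory.IntegrableOn.integral_Omg_right (hF : IntegrableOn F (Omg L)) :
    IntegrableOn (fun y => ∫ x in Ioo 0 L, F (x, y)) (Ioo (-1) 1) := by
  rw [IntegrableOn, restrict_Omg] at hF
  exact hF.integral_prod_right

theorem nrmSq_nonneg (L : ℝ) (f : ℝ × ℝ → ℝ) : 0 ≤ nrmSq L f :=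
  setIntegral_nonneg measurableSet_Omg fun _ _ => sq_nonneg _

theorem lapNrmSq_nonneg (L : ℝ) (f : ℝ × ℝ → ℝ) : 0 ≤ lapNrmSq L f :=
  setIntegral_nonneg measurableSet_Omg fun _ _ => sq_nonneg _

theorem gradNrmSq_nonneg (L : ℝ) (f : ℝ × ℝ → ℝ) : 0 ≤ gradNrmSq L f :=
  setIntegral_nonneg measurableSet_Omg fun _ _ => add_nonneg (sq_nonneg _) (sq_nonneg _)

theorem gradNrmSq_eq (hf : ContDiff ℝ ∞ f) : gradNrmSq L f = nrmSq L (d1 f) + nrmSq L (d2 f) :=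
  integral_add ((contDiff_d1 hf).continuous.pow 2).integrableOn_Omg
    ((contDiff_d2 hf).continuous.pow 2).integrableOn_Omg

theorem sq_integral_abs_mul_le (hf : Continuous f) (hg : Continuous g) :
    (∫ p in Omg L, |f p * g p|) ^ 2 ≤ nrmSq L f * nrmSq L g := by
  simpa only [abs_mul, sq_abs, nrmSq] using
    sq_integral_mul_le (hf.abs.memLp_restrict_Omg (L := L) 2) (hg.abs.memLp_restrict_Omg 2)

theorem pow_four_integral_dot_mul_le {a₁ a₂ b₁ b₂ c : ℝ × ℝ → ℝ} (ha₁ : Continuous a₁)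
    (ha₂ : Continuous a₂) (hb₁ : Continuous b₁) (hb₂ : Continuous b₂) (hc : Continuous c) :
    (∫ p in Omg L, (a₁ p * b₁ p + a₂ p * b₂ p) * c p) ^ 4 ≤
      (∫ p in Omg L, (a₁ p ^ 2 + a₂ p ^ 2) ^ 2) * (∫ p in Omg L, (b₁ p ^ 2 + b₂ p ^ 2) ^ 2) *
        nrmSq L c ^ 2 := by
  set W := ∫ p in Omg L, (a₁ p ^ 2 + a₂ p ^ 2) * (b₁ p ^ 2 + b₂ p ^ 2)
  have hdot : (∫ p in Omg L, (a₁ p * b₁ p + a₂ p * b₂ p) * c p) ^ 2 ≤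
      (∫ p in Omg L, (a₁ p * b₁ p + a₂ p * b₂ p) ^ 2) * nrmSq L c :=
    sq_integral_mul_le (Continuous.memLp_restrict_Omg (by fun_prop) 2) (hc.memLp_restrict_Omg 2)
  have hpointwise : ∫ p in Omg L, (a₁ p * b₁ p + a₂ p * b₂ p) ^ 2 ≤ W :=
    integral_mono (Continuous.integrableOn_Omg (by fun_prop))
      (Continuous.integrableOn_Omg (by fun_prop))
      fun p => by nlinarith [sq_nonneg (a₁ p * b₂ p - a₂ p * b₁ p)]
  have hW : W ^ 2 ≤ (∫ p in Omg L, (a₁ p ^ 2 + a₂ p ^ 2) ^ 2) *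
      ∫ p in Omg L, (b₁ p ^ 2 + b₂ p ^ 2) ^ 2 :=
    sq_integral_mul_le (Continuous.memLp_restrict_Omg (by fun_prop) 2)
      (Continuous.memLp_restrict_Omg (by fun_prop) 2)
  have hc0 := nrmSq_nonneg L c
  have hdot0 : 0 ≤ ∫ p in Omg L, (a₁ p * b₁ p + a₂ p * b₂ p) ^ 2 :=
    setIntegral_nonneg measurableSet_Omg fun _ _ => sq_nonneg _
  calc (∫ p in Omg L, (a₁ p * b₁ p + a₂ p * b₂ p) * c p) ^ 4
      = ((∫ p in Omg L, (a₁ p * b₁ p + a₂ p * b₂ p) * c p) ^ 2) ^ 2 := by ring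
    _ ≤ (W * nrmSq L c) ^ 2 := by gcongr; exact hdot.trans (by gcongr)
    _ = W ^ 2 * nrmSq L c ^ 2 := by ring
    _ ≤ _ := by gcongr

end Rectangle

section Periodic

variable {L : ℝ} {f g ξ : ℝ × ℝ → ℝ}

theorem integral_d1_slice_eq_zero (hL : 0 ≤ L) (hf : ContDiff ℝ ∞ f) (hp : OmgPeriodic L f)
    (y : ℝ) : ∫ x in Ioo 0 L, d1 f (x, y) = 0 := by
  have hc : Continuous (d1 f) := (contDiff_d1 hf).continuous
  simpa using integral_deriv_eq_zero_of_periodic hL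
    (fun x => hasDerivAt_d1 (hf.differentiable (by simp) (x, y))) (by fun_prop)
    (fun x => hp.1 x y) 0

theorem integral_d2_slice_eq_zero (hf : ContDiff ℝ ∞ f) (hp : OmgPeriodic L f) (x : ℝ) :
    ∫ y in Ioo (-1) 1, d2 f (x, y) = 0 := by
  have hc : Continuous (d2 f) := (contDiff_d2 hf).continuous
  simpa [show (-1 : ℝ) + 2 = 1 by norm_num] using integral_deriv_eq_zero_of_periodic zero_le_two
    (fun y => hasDerivAt_d2 (hf.differentiable (by simp) (x, y))) (by fun_prop)
    (fun y => hp.2 x y) (-1)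

theorem integral_d1_eq_zero (hL : 0 ≤ L) (hf : ContDiff ℝ ∞ f) (hp : OmgPeriodic L f) :
    ∫ p in Omg L, d1 f p = 0 := by
  rw [setIntegral_Omg_swap _ (contDiff_d1 hf).continuous.integrableOn_Omg]
  simp [integral_d1_slice_eq_zero hL hf hp]

theorem integral_d2_eq_zero (hf : ContDiff ℝ ∞ f) (hp : OmgPeriodic L f) :
    ∫ p in Omg L, d2 f p = 0 := by
  rw [setIntegral_Omg _ (contDiff_d2 hf).continuous.integrableOn_Omg]
  simp [integral_d2_slice_eq_zero hf hp]

theorem integral_d1_mul (hL : 0 ≤ L) (hf : ContDiff ℝ ∞ f) (hg : ContDiff ℝ ∞ g)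
    (hpf : OmgPeriodic L f) (hpg : OmgPeriodic L g) :
    ∫ p in Omg L, d1 f p * g p = -∫ p in Omg L, f p * d1 g p := by
  have h := integral_d1_eq_zero hL (hf.mul hg) (hpf.mul hpg)
  rw [funext fun p => d1_mul (hf.differentiable (by simp) p) (hg.differentiable (by simp) p),
    integral_add (f := fun p => d1 f p * g p) (g := fun p => f p * d1 g p)
      ((contDiff_d1 hf).continuous.mul hg.continuous).integrableOn_Omg
      (hf.continuous.mul (contDiff_d1 hg).continuous).integrableOn_Omg] at h
  linarith

theorem integral_d2_mul (hf : ContDiff ℝ ∞ f) (hg : ContDiff ℝ ∞ g)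
    (hpf : OmgPeriodic L f) (hpg : OmgPeriodic L g) :
    ∫ p in Omg L, d2 f p * g p = -∫ p in Omg L, f p * d2 g p := by
  have h := integral_d2_eq_zero (hf.mul hg) (hpf.mul hpg)
  rw [funext fun p => d2_mul (hf.differentiable (by simp) p) (hg.differentiable (by simp) p),
    integral_add (f := fun p => d2 f p * g p) (g := fun p => f p * d2 g p)
      ((contDiff_d2 hf).continuous.mul hg.continuous).integrableOn_Omg
      (hf.continuous.mul (contDiff_d2 hg).continuous).integrableOn_Omg] at h
  linarith

theorem integral_d1_d1_mul_d2_d2 (hL : 0 ≤ L) (hξ : ContDiff ℝ ∞ ξ) (hp : OmgPeriodic L ξ) :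
    ∫ p in Omg L, d1 (d1 ξ) p * d2 (d2 ξ) p = nrmSq L (d1 (d2 ξ)) := by
  have h1 := contDiff_d1 hξ
  have h2 := contDiff_d2 hξ
  -- `∫ ∂₁₁ξ ∂₂₂ξ = -∫ ∂₁ξ ∂₁₂₂ξ = -∫ ∂₁ξ ∂₂₁₂ξ = ∫ ∂₂₁ξ ∂₁₂ξ`
  rw [integral_d1_mul hL h1 (contDiff_d2 h2) hp.d1 hp.d2.d2, d1_d2 (h2.of_le (by norm_cast)),
    ← integral_d2_mul h1 (contDiff_d1 h2) hp.d1 hp.d2.d1, ← d1_d2 (hξ.of_le (by norm_cast)), nrmSq]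
  simp only [sq]

theorem lapNrmSq_eq (hL : 0 ≤ L) (hξ : ContDiff ℝ ∞ ξ) (hp : OmgPeriodic L ξ) :
    lapNrmSq L ξ = gradNrmSq L (d1 ξ) + gradNrmSq L (d2 ξ) := by
  have h11 := (contDiff_d1 (contDiff_d1 hξ)).continuous
  have h22 := (contDiff_d2 (contDiff_d2 hξ)).continuous
  have i11 : IntegrableOn (fun p => d1 (d1 ξ) p ^ 2) (Omg L) := (h11.pow 2).integrableOn_Omg
  have i22 : IntegrableOn (fun p => d2 (d2 ξ) p ^ 2) (Omg L) := (h22.pow 2).integrableOn_Omg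
  have i1122 : IntegrableOn (fun p => d1 (d1 ξ) p ^ 2 + d2 (d2 ξ) p ^ 2) (Omg L) := i11.add i22
  have i12 : IntegrableOn (fun p => 2 * (d1 (d1 ξ) p * d2 (d2 ξ) p)) (Omg L) :=
    (continuous_const.mul (h11.mul h22)).integrableOn_Omg
  have hlap : (fun p => lap ξ p ^ 2) =
      fun p => (d1 (d1 ξ) p ^ 2 + d2 (d2 ξ) p ^ 2) + 2 * (d1 (d1 ξ) p * d2 (d2 ξ) p) := by
    funext p
    rw [lap]
    ring
  rw [gradNrmSq_eq (contDiff_d1 hξ), gradNrmSq_eq (contDiff_d2 hξ),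
    ← d1_d2 (hξ.of_le (by norm_cast)), lapNrmSq, hlap, integral_add i1122 i12,
    integral_add i11 i22, integral_const_mul, integral_d1_d1_mul_d2_d2 hL hξ hp, nrmSq, nrmSq, nrmSq]
  ring

theorem nrmSq_d1_le (hL : 0 < L) (hξ : ContDiff ℝ ∞ ξ) (hp : OmgPeriodic L ξ) :
    nrmSq L (d1 ξ) ≤ L ^ 2 * nrmSq L (d1 (d1 ξ)) := by
  have h1 := contDiff_d1 hξ
  have hc1 := h1.continuous
  have hc11 := (contDiff_d1 h1).continuous
  rw [nrmSq, nrmSq, setIntegral_Omg_swap (fun p => d1 ξ p ^ 2) (hc1.pow 2).integrableOn_Omg,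
    setIntegral_Omg_swap (fun p => d1 (d1 ξ) p ^ 2) (hc11.pow 2).integrableOn_Omg,
    ← integral_const_mul]
  refine integral_mono (hc1.pow 2).integrableOn_Omg.integral_Omg_right
    ((hc11.pow 2).integrableOn_Omg.integral_Omg_right.const_mul _) fun y => ?_
  simpa using integral_sq_le_of_integral_eq_zero hL
    (fun x => hasDerivAt_d1 (h1.differentiable (by simp) (x, y))) (by fun_prop)
    (integral_d1_slice_eq_zero hL.le hξ hp y)

theorem nrmSq_d2_le (hξ : ContDiff ℝ ∞ ξ) (hp : OmgPeriodic L ξ) :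
    nrmSq L (d2 ξ) ≤ 4 * nrmSq L (d2 (d2 ξ)) := by
  have h2 := contDiff_d2 hξ
  have hc2 := h2.continuous
  have hc22 := (contDiff_d2 h2).continuous
  rw [nrmSq, nrmSq, setIntegral_Omg (fun p => d2 ξ p ^ 2) (hc2.pow 2).integrableOn_Omg,
    setIntegral_Omg (fun p => d2 (d2 ξ) p ^ 2) (hc22.pow 2).integrableOn_Omg,
    ← integral_const_mul]
  refine integral_mono (hc2.pow 2).integrableOn_Omg.integral_Omg_left
    ((hc22.pow 2).integrableOn_Omg.integral_Omg_left.const_mul _) fun x => ?_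
  simpa [show (1 : ℝ) - -1 = 2 by norm_num, show (2 : ℝ) ^ 2 = 4 by norm_num] using
    integral_sq_le_of_integral_eq_zero (by norm_num : (-1 : ℝ) < 1)
      (fun y => hasDerivAt_d2 (h2.differentiable (by simp) (x, y))) (by fun_prop)
      (integral_d2_slice_eq_zero hξ hp x)

theorem gradNrmSq_le (hL : 0 < L) (hξ : ContDiff ℝ ∞ ξ) (hp : OmgPeriodic L ξ) :
    gradNrmSq L ξ ≤ max (L ^ 2) 4 * lapNrmSq L ξ := by
  rw [gradNrmSq_eq hξ, lapNrmSq_eq hL.le hξ hp, gradNrmSq_eq (contDiff_d1 hξ),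
    gradNrmSq_eq (contDiff_d2 hξ)]
  have := nrmSq_nonneg L (d1 (d1 ξ))
  have := nrmSq_nonneg L (d2 (d1 ξ))
  have := nrmSq_nonneg L (d1 (d2 ξ))
  have := nrmSq_nonneg L (d2 (d2 ξ))
  nlinarith [nrmSq_d1_le hL hξ hp, nrmSq_d2_le hξ hp, le_max_left (L ^ 2) 4, le_max_right (L ^ 2) 4]

end Periodic

section Ladyzhenskaya

variable {L : ℝ} {f : ℝ × ℝ → ℝ}

theorem sq_le_integral_slice_fst (hL : 0 < L) (hf : ContDiff ℝ ∞ f) (y : ℝ) {x : ℝ}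
    (hx : x ∈ Icc 0 L) :
    f (x, y) ^ 2 ≤ ∫ s in Ioo 0 L, (L⁻¹ * f (s, y) ^ 2 + 2 * |f (s, y) * d1 f (s, y)|) := by
  have hc : Continuous f := hf.continuous
  have hc1 : Continuous (d1 f) := (contDiff_d1 hf).continuous
  have hd : ∀ s, HasDerivAt (fun s => f (s, y) ^ 2) (2 * f (s, y) * d1 f (s, y)) s := fun s => by
    simpa using (hasDerivAt_d1 (hf.differentiable (by simp) (s, y))).fun_pow 2
  have h := le_setAverage_add_integral_abs_deriv hL hd (by fun_prop) hx
  rw [setAverage_eq, Real.volume_real_Ioo_of_le hL.le, sub_zero, smul_eq_mul,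
    ← integral_const_mul] at h
  rw [integral_add (Continuous.integrableOn_Ioo (by fun_prop) _ _)
    (Continuous.integrableOn_Ioo (by fun_prop) _ _)]
  simpa only [abs_mul, abs_two, mul_assoc] using h

theorem sq_le_integral_slice_snd (hf : ContDiff ℝ ∞ f) (x : ℝ) {y : ℝ} (hy : y ∈ Icc (-1) 1) :
    f (x, y) ^ 2 ≤ ∫ t in Ioo (-1) 1, (2⁻¹ * f (x, t) ^ 2 + 2 * |f (x, t) * d2 f (x, t)|) := by
  have hc : Continuous f := hf.continuous
  have hc2 : Continuous (d2 f) := (contDiff_d2 hf).continuous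
  have hd : ∀ t, HasDerivAt (fun t => f (x, t) ^ 2) (2 * f (x, t) * d2 f (x, t)) t := fun t => by
    simpa using (hasDerivAt_d2 (hf.differentiable (by simp) (x, t))).fun_pow 2
  have h := le_setAverage_add_integral_abs_deriv (by norm_num) hd (by fun_prop) hy
  rw [setAverage_eq, Real.volume_real_Ioo_of_le (by norm_num), smul_eq_mul,
    ← integral_const_mul] at h
  rw [integral_add (Continuous.integrableOn_Ioo (by fun_prop) _ _)
    (Continuous.integrableOn_Ioo (by fun_prop) _ _)]
  rw [show (1 : ℝ) - -1 = 2 by norm_num] at h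
  simpa only [abs_mul, abs_two, mul_assoc] using h

theorem integral_pow_four_le_mul (hL : 0 < L) (hf : ContDiff ℝ ∞ f) :
    ∫ p in Omg L, f p ^ 4 ≤ (2⁻¹ * nrmSq L f + 2 * ∫ p in Omg L, |f p * d2 f p|) *
      (L⁻¹ * nrmSq L f + 2 * ∫ p in Omg L, |f p * d1 f p|) := by
  have hc : Continuous f := hf.continuous
  have hc1 : Continuous (d1 f) := (contDiff_d1 hf).continuous
  have hc2 : Continuous (d2 f) := (contDiff_d2 hf).continuous
  have i2 : IntegrableOn (fun p => 2⁻¹ * f p ^ 2 + 2 * |f p * d2 f p|) (Omg L) :=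
    Continuous.integrableOn_Omg (by fun_prop)
  have i1 : IntegrableOn (fun p => L⁻¹ * f p ^ 2 + 2 * |f p * d1 f p|) (Omg L) :=
    Continuous.integrableOn_Omg (by fun_prop)
  have hsplit : ∀ c : ℝ, ∀ g : ℝ × ℝ → ℝ, Continuous g →
      ∫ p in Omg L, (c * f p ^ 2 + 2 * |f p * g p|) =
        c * nrmSq L f + 2 * ∫ p in Omg L, |f p * g p| := fun c g hg => by
    rw [integral_add (Continuous.integrableOn_Omg (by fun_prop))
      (Continuous.integrableOn_Omg (by fun_prop)), integral_const_mul, integral_const_mul, nrmSq]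
  have hslices : ∀ᵐ z ∂(volume.restrict (Ioo 0 L)).prod (volume.restrict (Ioo (-1) 1)),
      z ∈ Omg L := by
    rw [← restrict_Omg]
    exact ae_restrict_mem measurableSet_Omg
  rw [← hsplit _ _ hc2, ← hsplit _ _ hc1, setIntegral_Omg _ i2, setIntegral_Omg_swap _ i1,
    restrict_Omg]
  simp only [show ∀ p : ℝ × ℝ, f p ^ 4 = (f p ^ 2) ^ 2 from fun p => by ring]
  refine integral_sq_le_integral_mul_integral i2.integral_Omg_left i1.integral_Omg_right
    (.of_forall fun z => sq_nonneg _) ?_ ?_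
  · filter_upwards [hslices] with z hz
    exact sq_le_integral_slice_snd hf z.1 (Ioo_subset_Icc_self hz.2)
  · filter_upwards [hslices] with z hz
    exact sq_le_integral_slice_fst hL hf z.2 (Ioo_subset_Icc_self hz.1)

theorem exists_integral_pow_four_le (hL : 0 < L) :
    ∃ C, 0 < C ∧ ∀ f : ℝ × ℝ → ℝ, ContDiff ℝ ∞ f →
      ∫ p in Omg L, f p ^ 4 ≤ C * nrmSq L f * (nrmSq L f + gradNrmSq L f) := by
  set m := max L⁻¹ 2⁻¹
  refine ⟨max (2 * m ^ 2) 4, by positivity, fun f hf => ?_⟩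
  set P := nrmSq L f
  set a₁ := ∫ p in Omg L, |f p * d1 f p|
  set a₂ := ∫ p in Omg L, |f p * d2 f p|
  have hP : 0 ≤ P := nrmSq_nonneg L f
  have ha₁ : 0 ≤ a₁ := setIntegral_nonneg measurableSet_Omg fun _ _ => abs_nonneg _
  have ha₂ : 0 ≤ a₂ := setIntegral_nonneg measurableSet_Omg fun _ _ => abs_nonneg _
  have h₁ : a₁ ^ 2 ≤ P * nrmSq L (d1 f) :=
    sq_integral_abs_mul_le hf.continuous (contDiff_d1 hf).continuous
  have h₂ : a₂ ^ 2 ≤ P * nrmSq L (d2 f) :=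
    sq_integral_abs_mul_le hf.continuous (contDiff_d2 hf).continuous
  calc ∫ p in Omg L, f p ^ 4 ≤ (2⁻¹ * P + 2 * a₂) * (L⁻¹ * P + 2 * a₁) :=
        integral_pow_four_le_mul hL hf
    _ ≤ (m * P + 2 * a₂) * (m * P + 2 * a₁) := by
        gcongr
        exacts [le_max_right _ _, le_max_left _ _]
    _ ≤ 2 * m ^ 2 * P ^ 2 + 4 * (a₁ ^ 2 + a₂ ^ 2) := by
        nlinarith [sq_nonneg (m * P - a₁ - a₂), sq_nonneg (a₁ - a₂)]
    _ ≤ 2 * m ^ 2 * P ^ 2 + 4 * (P * (nrmSq L (d1 f) + nrmSq L (d2 f))) := by linarith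
    _ ≤ max (2 * m ^ 2) 4 * P * (P + gradNrmSq L f) := by
        rw [gradNrmSq_eq hf]
        have := nrmSq_nonneg L (d1 f)
        have := nrmSq_nonneg L (d2 f)
        nlinarith [le_max_left (2 * m ^ 2) 4, le_max_right (2 * m ^ 2) 4]

theorem exists_integral_sq_add_sq_sq_le (hL : 0 < L) :
    ∃ C, 0 < C ∧ ∀ f g : ℝ × ℝ → ℝ, ContDiff ℝ ∞ f → ContDiff ℝ ∞ g →
      ∫ p in Omg L, (f p ^ 2 + g p ^ 2) ^ 2 ≤ C * (nrmSq L f + nrmSq L g) *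
        ((nrmSq L f + nrmSq L g) + (gradNrmSq L f + gradNrmSq L g)) := by
  obtain ⟨C, hC, hfour⟩ := exists_integral_pow_four_le hL
  refine ⟨2 * C, by positivity, fun f g hf hg => ?_⟩
  have hfc := hf.continuous
  have hgc := hg.continuous
  have i₁ : IntegrableOn (fun p => f p ^ 4) (Omg L) := (hfc.pow 4).integrableOn_Omg
  have i₂ : IntegrableOn (fun p => g p ^ 4) (Omg L) := (hgc.pow 4).integrableOn_Omg
  calc ∫ p in Omg L, (f p ^ 2 + g p ^ 2) ^ 2 ≤ ∫ p in Omg L, (2 * f p ^ 4 + 2 * g p ^ 4) :=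
        integral_mono (Continuous.integrableOn_Omg (by fun_prop)) ((i₁.const_mul 2).add
          (i₂.const_mul 2)) fun p => by nlinarith [sq_nonneg (f p ^ 2 - g p ^ 2)]
    _ = 2 * (∫ p in Omg L, f p ^ 4) + 2 * ∫ p in Omg L, g p ^ 4 := by
        rw [integral_add (i₁.const_mul 2) (i₂.const_mul 2), integral_const_mul, integral_const_mul]
    _ ≤ 2 * (C * nrmSq L f * (nrmSq L f + gradNrmSq L f)) +
          2 * (C * nrmSq L g * (nrmSq L g + gradNrmSq L g)) := by
        gcongr
        exacts [hfour f hf, hfour g hg]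
    _ ≤ _ := by
        nlinarith [mul_nonneg hC.le (mul_nonneg (nrmSq_nonneg L f) (nrmSq_nonneg L g)),
          mul_nonneg hC.le (mul_nonneg (nrmSq_nonneg L f) (gradNrmSq_nonneg L g)),
          mul_nonneg hC.le (mul_nonneg (nrmSq_nonneg L g) (gradNrmSq_nonneg L f))]

end Ladyzhenskaya

/-- estimate (3.24) of the paper:
`|∫_Ω ((v·∇)ξ) Δξ| ≤ (κ/20)‖Δξ‖² + (c/κ³)‖v‖²(‖v‖² + ‖∇v‖²)‖∇ξ‖²`. -/
theorem transport_laplacian_estimate (L : ℝ) (hL : 0 < L) :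
    ∃ c : ℝ, 0 < c ∧ ∀ κ : ℝ, 0 < κ →
      ∀ v₁ v₂ ξ : ℝ × ℝ → ℝ,
        ContDiff ℝ (⊤ : ℕ∞) v₁ → ContDiff ℝ (⊤ : ℕ∞) v₂ → ContDiff ℝ (⊤ : ℕ∞) ξ →
        OmgPeriodic L v₁ → OmgPeriodic L v₂ → OmgPeriodic L ξ →
        DivFree v₁ v₂ →
        |∫ p in Omg L, (v₁ p * d1 ξ p + v₂ p * d2 ξ p) * lap ξ p| ≤
          κ / 20 * lapNrmSq L ξ
            + c / κ ^ 3 * (nrmSq L v₁ + nrmSq L v₂)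
                * ((nrmSq L v₁ + nrmSq L v₂) + (gradNrmSq L v₁ + gradNrmSq L v₂))
                * gradNrmSq L ξ := by
  obtain ⟨C, hC, hlady⟩ := exists_integral_sq_add_sq_sq_le hL
  set K := max (L ^ 2) 4
  refine ⟨3375 / 4 * (C ^ 2 * (K + 1)), by positivity, fun κ hκ v₁ v₂ ξ hv₁ hv₂ hξ _ _ hpξ _ => ?_⟩
  set V := nrmSq L v₁ + nrmSq L v₂
  set X := V * (V + (gradNrmSq L v₁ + gradNrmSq L v₂))
  set G := gradNrmSq L ξ
  set D := lapNrmSq L ξ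
  have hv : ∫ p in Omg L, (v₁ p ^ 2 + v₂ p ^ 2) ^ 2 ≤ C * X :=
    (hlady v₁ v₂ hv₁ hv₂).trans_eq (mul_assoc _ _ _)
  have hG0 : 0 ≤ G := gradNrmSq_nonneg L ξ
  have hG : G ≤ K * D := gradNrmSq_le hL hξ hpξ
  have hgrad : ∫ p in Omg L, (d1 ξ p ^ 2 + d2 ξ p ^ 2) ^ 2 ≤ C * G * ((K + 1) * D) := by
    have := hlady _ _ (contDiff_d1 hξ) (contDiff_d2 hξ)
    rw [← gradNrmSq_eq hξ, ← lapNrmSq_eq hL.le hξ hpξ] at this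
    exact this.trans (mul_le_mul_of_nonneg_left (by linarith) (mul_nonneg hC.le hG0))
  have h4 : (∫ p in Omg L, (v₁ p * d1 ξ p + v₂ p * d2 ξ p) * lap ξ p) ^ 4 ≤
      (∫ p in Omg L, (v₁ p ^ 2 + v₂ p ^ 2) ^ 2) *
        (∫ p in Omg L, (d1 ξ p ^ 2 + d2 ξ p ^ 2) ^ 2) * D ^ 2 :=
    pow_four_integral_dot_mul_le hv₁.continuous hv₂.continuous
      (contDiff_d1 hξ).continuous (contDiff_d2 hξ).continuous (contDiff_lap hξ).continuous
  have hV : 0 ≤ V := add_nonneg (nrmSq_nonneg L v₁) (nrmSq_nonneg L v₂)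
  have hX : 0 ≤ X := mul_nonneg hV (add_nonneg hV
    (add_nonneg (gradNrmSq_nonneg L v₁) (gradNrmSq_nonneg L v₂)))
  have hD0 : 0 ≤ D := lapNrmSq_nonneg L ξ
  refine (le_add_of_pow_four_le_mul_pow_three hD0 (M := C ^ 2 * (K + 1) * X * G) (by positivity)
    hκ ?_).trans_eq (by ring)
  calc |∫ p in Omg L, (v₁ p * d1 ξ p + v₂ p * d2 ξ p) * lap ξ p| ^ 4
      = (∫ p in Omg L, (v₁ p * d1 ξ p + v₂ p * d2 ξ p) * lap ξ p) ^ 4 := Even.pow_abs ⟨2, rfl⟩ _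
    _ ≤ (C * X) * (C * G * ((K + 1) * D)) * D ^ 2 := by
        refine h4.trans ?_
        gcongr
    _ = C ^ 2 * (K + 1) * X * G * D ^ 3 := by ring
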